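/- arXiv:2211.11383 — 4 statements merged into one kernel-verified Lean document; each statement's English description precedes it below -/
import Mathlib

section
/- Let X be an n×p real matrix of rank p with n ≥ p, τ > 0, and D a p×p diagonal matrix with positive diagonal entries. If μ = (XᵀX + D/τ)⁻¹ Xᵀ y for y ∈ ℝⁿ, then ‖Xμ‖² ≤ yᵀ X (XᵀX)⁻¹ Xᵀ y. -/
/-! Write `A = XᵀX`, which is positive definite because `X` has full column rank, and
`E = τ⁻¹ D ⪰ 0`. The normal equations give `Xᵀy = Aμ + u` with `u = Eμ`, and expanding,
`(Xᵀy)ᵀ A⁻¹ (Xᵀy) = μᵀAμ + 2 μᵀEμ + uᵀA⁻¹u ≥ μᵀAμ = ‖Xμ‖²`. -/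

open Matrix

theorem Matrix.mulVec_injective_of_rank_eq_card {K m n : Type*} [Field K] [Fintype m]
    [Fintype n] {A : Matrix m n K} (hA : A.rank = Fintype.card n) :
    Function.Injective A.mulVec := by
  have hker : Module.finrank K (LinearMap.ker A.mulVecLin) = 0 := by
    have := A.mulVecLin.finrank_range_add_finrank_ker
    rw [← Matrix.rank, hA, Module.finrank_fintype_fun_eq_card] at this
    omega
  rw [← Matrix.coe_mulVecLin, ← LinearMap.ker_eq_bot, ← Submodule.finrank_eq_zero, hker]

theorem Matrix.posDef_transpose_mul_self_of_rank_eq_card {m n : Type*} [Fintype m] [Fintype n]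
    {X : Matrix m n ℝ} (hX : X.rank = Fintype.card n) : (Xᵀ * X).PosDef :=
  PosDef.conjTranspose_mul_self X (mulVec_injective_of_rank_eq_card hX)

theorem Matrix.mulVec_dotProduct {R m n : Type*} [CommSemiring R] [Fintype m] [Fintype n]
    (A : Matrix m n R) (v : n → R) (w : m → R) : (A *ᵥ v) ⬝ᵥ w = v ⬝ᵥ (Aᵀ *ᵥ w) := by
  rw [dotProduct_mulVec, vecMul_transpose, dotProduct_comm]

theorem Matrix.dotProduct_mulVec_le_of_add_mulVec_eq {n : Type*} [Fintype n] [DecidableEq n]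
    {A E : Matrix n n ℝ} (hA : A.PosDef) (hE : E.PosSemidef) {μ z : n → ℝ}
    (hμ : (A + E) *ᵥ μ = z) : μ ⬝ᵥ (A *ᵥ μ) ≤ z ⬝ᵥ (A⁻¹ *ᵥ z) := by
  have hAdet : IsUnit A.det := (isUnit_iff_isUnit_det _).mp hA.isUnit
  have hAsymm : Aᵀ = A := by simpa using hA.isHermitian.eq
  set u := E *ᵥ μ
  have hz : z = A *ᵥ μ + u := by rw [← hμ, add_mulVec]
  have hAinv : A⁻¹ *ᵥ (A *ᵥ μ) = μ := by
    rw [mulVec_mulVec, nonsing_inv_mul _ hAdet, one_mulVec]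
  have hcross : (A *ᵥ μ) ⬝ᵥ (A⁻¹ *ᵥ u) = μ ⬝ᵥ u := by
    rw [mulVec_dotProduct, hAsymm, mulVec_mulVec, mul_nonsing_inv _ hAdet, one_mulVec]
  have hEμ : 0 ≤ μ ⬝ᵥ u := by simpa using hE.dotProduct_mulVec_nonneg μ
  have hAu : 0 ≤ u ⬝ᵥ (A⁻¹ *ᵥ u) := by simpa using hA.inv.posSemidef.dotProduct_mulVec_nonneg u
  calc μ ⬝ᵥ (A *ᵥ μ) ≤ μ ⬝ᵥ (A *ᵥ μ) + 2 * (μ ⬝ᵥ u) + u ⬝ᵥ (A⁻¹ *ᵥ u) := by linarith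
    _ = z ⬝ᵥ (A⁻¹ *ᵥ z) := by
      rw [hz, mulVec_add, hAinv, add_dotProduct, dotProduct_add, dotProduct_add, hcross,
        dotProduct_comm (A *ᵥ μ), dotProduct_comm u μ]
      ring

theorem norm_X_mu_le_general {n p : ℕ} (X : Matrix (Fin n) (Fin p) ℝ)
    (hrank : X.rank = p) (y : Fin n → ℝ) (τ : ℝ) (hτ : 0 < τ)
    (d : Fin p → ℝ) (hd : ∀ i, 0 < d i)
    (μ : Fin p → ℝ)
    (hμ : μ = (Xᵀ * X + τ⁻¹ • Matrix.diagonal d)⁻¹ *ᵥ (Xᵀ *ᵥ y)) :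
    (X *ᵥ μ) ⬝ᵥ (X *ᵥ μ) ≤ y ⬝ᵥ (X *ᵥ ((Xᵀ * X)⁻¹ *ᵥ (Xᵀ *ᵥ y))) := by
  have hA : (Xᵀ * X).PosDef :=
    posDef_transpose_mul_self_of_rank_eq_card (hrank.trans (Fintype.card_fin p).symm)
  have hE : (τ⁻¹ • diagonal d).PosSemidef := by
    rw [← diagonal_smul]
    exact PosSemidef.diagonal fun i => (mul_pos (inv_pos.2 hτ) (hd i)).le
  have hAE : IsUnit (Xᵀ * X + τ⁻¹ • diagonal d) := (hA.add_posSemidef hE).isUnit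
  have hnormal : (Xᵀ * X + τ⁻¹ • diagonal d) *ᵥ μ = Xᵀ *ᵥ y := by
    rw [hμ, mulVec_mulVec, mul_nonsing_inv _ ((isUnit_iff_isUnit_det _).mp hAE), one_mulVec]
  rw [mulVec_dotProduct, mulVec_mulVec, dotProduct_comm y, mulVec_dotProduct,
    dotProduct_comm _ (Xᵀ *ᵥ y)]
  exact dotProduct_mulVec_le_of_add_mulVec_eq hA hE hnormal

theorem norm_X_mu_le {n p : ℕ} (hnp : p ≤ n) (X : Matrix (Fin n) (Fin p) ℝ)
    (hrank : X.rank = p) (y : Fin n → ℝ) (τ : ℝ) (hτ : 0 < τ)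
    (d : Fin p → ℝ) (hd : ∀ i, 0 < d i)
    (μ : Fin p → ℝ)
    (hμ : μ = (Xᵀ * X + τ⁻¹ • Matrix.diagonal d)⁻¹ *ᵥ (Xᵀ *ᵥ y)) :
    (X *ᵥ μ) ⬝ᵥ (X *ᵥ μ) ≤ y ⬝ᵥ (X *ᵥ ((Xᵀ * X)⁻¹ *ᵥ (Xᵀ *ᵥ y))) :=
  norm_X_mu_le_general X hrank y τ hτ d hd μ hμ
end

section
/- Let X be an n×p full column rank real matrix (n ≥ p) and y ∈ ℝⁿ. Let v₁ > v₀ > 0 and let W be a p×p diagonal matrix with entries in [0,1]. For k ∈ {0,1} let W^{(jk)} be W with its j-th diagonal entry replaced by k, let Σ^{(jk)} = (XᵀX + (1/v₀)I + (1/v₁ - 1/v₀)W^{(jk)})⁻¹, and μ^{(jk)} = Σ^{(jk)} Xᵀ y. Then yᵀX Σ^{(j1)} Xᵀy - yᵀX Σ^{(j0)} Xᵀy = (1/v₀ - 1/v₁) μ_j^{(j0)} μ_j^{(j1)}. -/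
open Matrix

/-! With `A₀, A₁` the two precision matrices, `A₀ - A₁ = (v₀⁻¹ - v₁⁻¹) eⱼeⱼᵀ`, so the resolvent
identity `A₁⁻¹ - A₀⁻¹ = A₁⁻¹ (A₀ - A₁) A₀⁻¹` turns the difference of the two quadratic forms in
`Xᵀy` into `(v₀⁻¹ - v₁⁻¹) (eⱼᵀ A₁⁻¹ Xᵀy) (eⱼᵀ A₀⁻¹ Xᵀy)`, using that `A₁⁻¹` is symmetric.
Both precision matrices are positive definite, hence invertible, because every diagonal entry of
`v₀⁻¹ I + (v₁⁻¹ - v₀⁻¹) W` is a convex combination of `v₀⁻¹` and `v₁⁻¹`. -/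

namespace Matrix

variable {m R : Type*} [Fintype m] [DecidableEq m] [CommRing R]

theorem dotProduct_mul_diagonal_single_mul_mulVec {S T : Matrix m m R} (hS : Sᵀ = S)
    (v : m → R) (j : m) (d : R) :
    v ⬝ᵥ ((S * diagonal (Pi.single j d) * T) *ᵥ v) = d * (S *ᵥ v) j * (T *ᵥ v) j := by
  have hdiag : diagonal (Pi.single j d) *ᵥ (T *ᵥ v) = Pi.single j (d * (T *ᵥ v) j) := by
    ext i
    rw [mulVec_diagonal]
    rcases eq_or_ne i j with rfl | hij
    · simp
    · simp [hij]
  rw [← mulVec_mulVec, ← mulVec_mulVec, hdiag, dotProduct_mulVec, ← mulVec_transpose, hS,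
    dotProduct_single]
  ring

theorem dotProduct_inv_mulVec_sub_of_sub_eq_diagonal_single {A B : Matrix m m R}
    (hA : IsUnit A) (hB : IsUnit B) (hB_symm : Bᵀ = B) {j : m} {d : R}
    (hAB : A - B = diagonal (Pi.single j d)) (v : m → R) :
    v ⬝ᵥ (B⁻¹ *ᵥ v) - v ⬝ᵥ (A⁻¹ *ᵥ v) = d * (B⁻¹ *ᵥ v) j * (A⁻¹ *ᵥ v) j := by
  rw [← dotProduct_sub, ← sub_mulVec, inv_sub_inv (iff_of_true hB hA), hAB]
  exact dotProduct_mul_diagonal_single_mul_mulVec (by rw [transpose_nonsing_inv, hB_symm]) v j d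

end Matrix

section SpikeSlab

variable {ι κ : Type*} [Fintype ι] [DecidableEq κ]

/-- The paper's `Σ⁻¹` for the weights `w` on the diagonal of `W`. -/
noncomputable def spikeSlabPrecision (X : Matrix ι κ ℝ) (v0 v1 : ℝ) (w : κ → ℝ) :
    Matrix κ κ ℝ :=
  Xᵀ * X + v0⁻¹ • (1 : Matrix κ κ ℝ) + (v1⁻¹ - v0⁻¹) • diagonal w

theorem spikeSlabPrecision_posDef [Fintype κ] (X : Matrix ι κ ℝ) {v0 v1 : ℝ} (hv0 : 0 < v0)
    (hv1 : 0 < v1) {w : κ → ℝ} (hw : ∀ i, w i ∈ Set.Icc (0 : ℝ) 1) :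
    (spikeSlabPrecision X v0 v1 w).PosDef := by
  have hdiag : v0⁻¹ • (1 : Matrix κ κ ℝ) + (v1⁻¹ - v0⁻¹) • diagonal w
      = diagonal (fun i => (1 - w i) * v0⁻¹ + w i * v1⁻¹) := by
    rw [smul_one_eq_diagonal, ← diagonal_smul, diagonal_add]
    congr 1
    funext i
    simp only [Pi.smul_apply, smul_eq_mul]
    ring
  have hpos : ∀ i, 0 < (1 - w i) * v0⁻¹ + w i * v1⁻¹ := fun i => by
    obtain ⟨hw0, hw1⟩ := hw i
    rcases hw0.eq_or_lt with hwi | hwi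
    · simp [← hwi, hv0]
    · exact add_pos_of_nonneg_of_pos (mul_nonneg (sub_nonneg.2 hw1) (inv_pos.2 hv0).le)
        (mul_pos hwi (inv_pos.2 hv1))
  have hXX : (Xᵀ * X).PosSemidef := by
    simpa only [conjTranspose_eq_transpose_of_trivial] using posSemidef_conjTranspose_mul_self X
  rw [spikeSlabPrecision, add_assoc, hdiag]
  exact PosDef.posSemidef_add hXX (PosDef.diagonal hpos)

theorem spikeSlabPrecision_transpose (X : Matrix ι κ ℝ) (v0 v1 : ℝ) (w : κ → ℝ) :
    (spikeSlabPrecision X v0 v1 w)ᵀ = spikeSlabPrecision X v0 v1 w := by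
  simp [spikeSlabPrecision, transpose_add, transpose_smul, transpose_mul]

theorem spikeSlabPrecision_update_sub (X : Matrix ι κ ℝ) (v0 v1 : ℝ) (w : κ → ℝ) (j : κ)
    (a b : ℝ) :
    spikeSlabPrecision X v0 v1 (Function.update w j a)
        - spikeSlabPrecision X v0 v1 (Function.update w j b)
      = diagonal (Pi.single j ((v1⁻¹ - v0⁻¹) * (a - b))) := by
  rw [spikeSlabPrecision, spikeSlabPrecision, add_sub_add_left_eq_sub, ← smul_sub,
    diagonal_sub, ← diagonal_smul]
  congr 1
  funext i
  rcases eq_or_ne i j with rfl | hij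
  · simp
  · simp [hij]

end SpikeSlab

theorem collapsed_quadratic_diff_general {n p : ℕ}
    (X : Matrix (Fin n) (Fin p) ℝ) (y : Fin n → ℝ)
    (v0 v1 : ℝ) (hv0 : 0 < v0) (hv01 : v0 < v1)
    (w : Fin p → ℝ) (hw : ∀ i, w i ∈ Set.Icc (0 : ℝ) 1) (j : Fin p)
    (S0 S1 : Matrix (Fin p) (Fin p) ℝ)
    (hS0 : S0 = (Xᵀ * X + v0⁻¹ • (1 : Matrix (Fin p) (Fin p) ℝ)
        + (v1⁻¹ - v0⁻¹) • Matrix.diagonal (Function.update w j 0))⁻¹)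
    (hS1 : S1 = (Xᵀ * X + v0⁻¹ • (1 : Matrix (Fin p) (Fin p) ℝ)
        + (v1⁻¹ - v0⁻¹) • Matrix.diagonal (Function.update w j 1))⁻¹)
    (μ0 μ1 : Fin p → ℝ)
    (hμ0 : μ0 = S0 *ᵥ (Xᵀ *ᵥ y)) (hμ1 : μ1 = S1 *ᵥ (Xᵀ *ᵥ y)) :
    y ⬝ᵥ (X *ᵥ (S1 *ᵥ (Xᵀ *ᵥ y))) - y ⬝ᵥ (X *ᵥ (S0 *ᵥ (Xᵀ *ᵥ y)))
      = (v0⁻¹ - v1⁻¹) * μ0 j * μ1 j := by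
  have hv1 : 0 < v1 := hv0.trans hv01
  have hw_update : ∀ k ∈ Set.Icc (0 : ℝ) 1, ∀ i, Function.update w j k i ∈ Set.Icc (0 : ℝ) 1 :=
    fun k hk i => by
      rcases eq_or_ne i j with rfl | hij
      · simpa using hk
      · simpa [Function.update_of_ne hij] using hw i
  have hA0 := spikeSlabPrecision_posDef X hv0 hv1 (hw_update 0 (by simp))
  have hA1 := spikeSlabPrecision_posDef X hv0 hv1 (hw_update 1 (by simp))
  have hyX : ∀ u, y ⬝ᵥ (X *ᵥ u) = (Xᵀ *ᵥ y) ⬝ᵥ u := fun u => by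
    rw [dotProduct_mulVec, mulVec_transpose]
  change S0 = (spikeSlabPrecision X v0 v1 (Function.update w j 0))⁻¹ at hS0
  change S1 = (spikeSlabPrecision X v0 v1 (Function.update w j 1))⁻¹ at hS1
  rw [hyX, hyX, hμ0, hμ1, hS0, hS1,
    dotProduct_inv_mulVec_sub_of_sub_eq_diagonal_single hA0.isUnit hA1.isUnit
      (spikeSlabPrecision_transpose X v0 v1 _) (spikeSlabPrecision_update_sub X v0 v1 w j 0 1)]
  ring

theorem collapsed_quadratic_diff {n p : ℕ} (hnp : p ≤ n)
    (X : Matrix (Fin n) (Fin p) ℝ) (hrank : X.rank = p) (y : Fin n → ℝ)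
    (v0 v1 : ℝ) (hv0 : 0 < v0) (hv01 : v0 < v1)
    (w : Fin p → ℝ) (hw : ∀ i, w i ∈ Set.Icc (0 : ℝ) 1) (j : Fin p)
    (S0 S1 : Matrix (Fin p) (Fin p) ℝ)
    (hS0 : S0 = (Xᵀ * X + v0⁻¹ • (1 : Matrix (Fin p) (Fin p) ℝ)
        + (v1⁻¹ - v0⁻¹) • Matrix.diagonal (Function.update w j 0))⁻¹)
    (hS1 : S1 = (Xᵀ * X + v0⁻¹ • (1 : Matrix (Fin p) (Fin p) ℝ)
        + (v1⁻¹ - v0⁻¹) • Matrix.diagonal (Function.update w j 1))⁻¹)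
    (μ0 μ1 : Fin p → ℝ)
    (hμ0 : μ0 = S0 *ᵥ (Xᵀ *ᵥ y)) (hμ1 : μ1 = S1 *ᵥ (Xᵀ *ᵥ y)) :
    y ⬝ᵥ (X *ᵥ (S1 *ᵥ (Xᵀ *ᵥ y))) - y ⬝ᵥ (X *ᵥ (S0 *ᵥ (Xᵀ *ᵥ y)))
      = (v0⁻¹ - v1⁻¹) * μ0 j * μ1 j :=
  collapsed_quadratic_diff_general X y v0 v1 hv0 hv01 w hw j S0 S1 hS0 hS1 μ0 μ1 hμ0 hμ1
end

section
/- Let V ~ PG(b, c) be a Pólya–Gamma random variable with b > 0 and c real. Then E(V) = (b/(2c)) tanh(c/2) for c ≠ 0. -/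
/-!
With `L t = E[e^{-tV}]`, the mean is `E[V] = -L'(0)`: for fixed `x` the difference quotients
`(1 - e^{-tx})/t` increase to `x` as `t ↓ 0` (convexity of `t ↦ e^{-tx}`), so on `(0, t₀]` they
are dominated by `|x| + |(1 - e^{-t₀x})/t₀|` and dominated convergence applies. Differentiating
the closed form `(cosh(c/2) / cosh(√(c² + 2t)/2))^b` at `0` gives `-(b/(2c)) tanh(c/2)`.
-/

open MeasureTheory Filter Topology Set Real

lemma convexOn_exp_neg_mul (x : ℝ) : ConvexOn ℝ univ (fun t : ℝ => exp (-t * x)) := by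
  have := convexOn_exp.comp_linearMap (LinearMap.id.smulRight (-x) : ℝ →ₗ[ℝ] ℝ)
  simpa [Function.comp_def] using this

lemma antitoneOn_one_sub_exp_neg_mul_div (x : ℝ) :
    AntitoneOn (fun t : ℝ => (1 - exp (-t * x)) / t) (Ioi 0) := by
  intro s hs t ht hst
  have := (convexOn_exp_neg_mul x).secant_mono (mem_univ 0) (mem_univ s) (mem_univ t)
    (ne_of_gt hs) (ne_of_gt ht) hst
  simp only [neg_zero, zero_mul, exp_zero, sub_zero] at this
  rw [← neg_sub, neg_div, ← neg_sub 1, neg_div] at this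
  exact neg_le_neg_iff.mp this

lemma one_sub_exp_neg_mul_div_le (x : ℝ) {t : ℝ} (ht : 0 < t) : (1 - exp (-t * x)) / t ≤ x := by
  rw [div_le_iff₀ ht]
  linarith [add_one_le_exp (-t * x)]

lemma tendsto_one_sub_exp_neg_mul_div (x : ℝ) :
    Tendsto (fun t : ℝ => (1 - exp (-t * x)) / t) (𝓝[>] 0) (𝓝 x) := by
  have hderiv : HasDerivAt (fun t : ℝ => 1 - exp (-t * x)) x 0 := by
    simpa using (((hasDerivAt_id (0 : ℝ)).neg.mul_const x).exp).const_sub 1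
  refine ((hasDerivAt_iff_tendsto_slope.mp hderiv).mono_left
    (nhdsWithin_mono _ fun t ht => ne_of_gt ht)).congr fun t => ?_
  simp [slope_def_field]

lemma abs_one_sub_exp_neg_mul_div_le {x t t₀ : ℝ} (ht : 0 < t) (htt₀ : t ≤ t₀) :
    |(1 - exp (-t * x)) / t| ≤ |x| + |(1 - exp (-t₀ * x)) / t₀| := by
  have hlower := antitoneOn_one_sub_exp_neg_mul_div x ht (ht.trans_le htt₀) htt₀
  have hupper := one_sub_exp_neg_mul_div_le x ht
  rw [abs_le]
  constructor <;> linarith [neg_abs_le ((1 - exp (-t₀ * x)) / t₀), le_abs_self x,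
    abs_nonneg x, abs_nonneg ((1 - exp (-t₀ * x)) / t₀)]

section Laplace

variable {Ω : Type*} [MeasurableSpace Ω] {μ : Measure Ω} {V : Ω → ℝ}

theorem tendsto_integral_one_sub_exp_neg_mul_div [IsFiniteMeasure μ] {t₀ : ℝ} (ht₀ : 0 < t₀)
    (hV : Integrable V μ) (hexp : Integrable (fun ω => exp (-t₀ * V ω)) μ) :
    Tendsto (fun t => ∫ ω, (1 - exp (-t * V ω)) / t ∂μ) (𝓝[>] 0) (𝓝 (∫ ω, V ω ∂μ)) := by
  refine tendsto_integral_filter_of_dominated_convergence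
    (fun ω => |V ω| + |(1 - exp (-t₀ * V ω)) / t₀|) ?_ ?_ ?_ ?_
  · refine Eventually.of_forall fun t => ?_
    have : Continuous fun x : ℝ => (1 - exp (-t * x)) / t := by fun_prop
    exact this.comp_aestronglyMeasurable hV.aestronglyMeasurable
  · filter_upwards [Ioc_mem_nhdsGT ht₀] with t ht
    exact Eventually.of_forall fun ω => abs_one_sub_exp_neg_mul_div_le ht.1 ht.2
  · exact hV.abs.add (((integrable_const 1).sub hexp).div_const t₀).abs
  · exact Eventually.of_forall fun ω => tendsto_one_sub_exp_neg_mul_div (V ω)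

theorem integral_eq_neg_of_hasDerivWithinAt_laplace [IsProbabilityMeasure μ] {L : ℝ → ℝ}
    {d : ℝ} (hV : Integrable V μ) (hL : ∀ t : ℝ, 0 ≤ t → ∫ ω, exp (-t * V ω) ∂μ = L t)
    (hd : HasDerivWithinAt L d (Ici 0) 0) :
    ∫ ω, V ω ∂μ = -d := by
  have hL0 : L 0 = 1 := by simpa using (hL 0 le_rfl).symm
  have hslope : Tendsto (slope L 0) (𝓝[>] 0) (𝓝 d) := by
    simpa using (hasDerivWithinAt_iff_tendsto_slope.mp hd)
  have hne : ∀ᶠ t in 𝓝[>] (0 : ℝ), L t ≠ 0 :=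
    (hd.continuousWithinAt.mono Ioi_subset_Ici_self).eventually_ne (by simp [hL0])
  -- a non-integrable function has integral `0`, so `L t ≠ 0` forces integrability
  have hint : ∀ᶠ t in 𝓝[>] (0 : ℝ), 0 < t ∧ Integrable (fun ω => exp (-t * V ω)) μ := by
    filter_upwards [self_mem_nhdsWithin, hne] with t (ht : 0 < t) hLt
    exact ⟨ht, Integrable.of_integral_ne_zero (by rwa [hL t ht.le])⟩
  obtain ⟨t₀, ht₀, hexp⟩ := hint.exists
  have hquot : ∀ᶠ t in 𝓝[>] (0 : ℝ), ∫ ω, (1 - exp (-t * V ω)) / t ∂μ = -slope L 0 t := by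
    filter_upwards [hint] with t ⟨ht, hexp_t⟩
    rw [integral_div, integral_sub (integrable_const 1) hexp_t, hL t ht.le, slope_def_field, hL0]
    simp [← neg_div, neg_sub]
  exact tendsto_nhds_unique ((tendsto_integral_one_sub_exp_neg_mul_div ht₀ hV hexp).congr' hquot)
    hslope.neg

end Laplace

lemma cosh_sqrt_sq_add_two_mul_zero_div_two (c : ℝ) :
    cosh (√(c ^ 2 + 2 * 0) / 2) = cosh (c / 2) := by
  rw [mul_zero, add_zero, sqrt_sq_eq_abs, ← abs_two, ← abs_div, cosh_abs, abs_two]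

lemma hasDerivAt_cosh_sqrt_sq_add_two_mul_div_two {c : ℝ} (hc : c ≠ 0) :
    HasDerivAt (fun t : ℝ => cosh (√(c ^ 2 + 2 * t) / 2)) (sinh (c / 2) / (2 * c)) 0 := by
  have hsq : c ^ 2 + 2 * 0 ≠ 0 := by simpa using hc
  have hlin : HasDerivAt (fun t : ℝ => c ^ 2 + 2 * t) 2 0 := by
    simpa using ((hasDerivAt_id (0 : ℝ)).const_mul 2).const_add (c ^ 2)
  have := (((hasDerivAt_sqrt hsq).comp 0 hlin).div_const 2).cosh
  simp only [Function.comp_def] at this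
  convert this using 1
  rw [mul_zero, add_zero, sqrt_sq_eq_abs]
  rcases lt_or_gt_of_ne hc with h | h
  · rw [abs_of_neg h, neg_div, sinh_neg]
    field_simp
  · rw [abs_of_pos h]
    field_simp

noncomputable def polyaGammaLaplace (b c t : ℝ) : ℝ :=
  (cosh (c / 2) / cosh (√(c ^ 2 + 2 * t) / 2)) ^ b

theorem hasDerivAt_polyaGammaLaplace (b : ℝ) {c : ℝ} (hc : c ≠ 0) :
    HasDerivAt (polyaGammaLaplace b c) (-(b / (2 * c) * tanh (c / 2))) 0 := by
  have hcosh : cosh (c / 2) ≠ 0 := (cosh_pos _).ne'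
  have hratio := (hasDerivAt_const (0 : ℝ) (cosh (c / 2))).div
    (hasDerivAt_cosh_sqrt_sq_add_two_mul_div_two hc)
    (by rwa [cosh_sqrt_sq_add_two_mul_zero_div_two])
  simp only [Pi.div_def, cosh_sqrt_sq_add_two_mul_zero_div_two] at hratio
  refine (hratio.rpow_const (p := b) (Or.inl ?_)).congr_deriv ?_
  · rw [cosh_sqrt_sq_add_two_mul_zero_div_two, div_self hcosh]
    exact one_ne_zero
  · rw [cosh_sqrt_sq_add_two_mul_zero_div_two, div_self hcosh, one_rpow, tanh_eq_sinh_div_cosh]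
    field_simp
    ring

theorem polyaGamma_mean_general {Ω : Type*} [MeasurableSpace Ω] (μ : Measure Ω)
    [IsProbabilityMeasure μ] (V : Ω → ℝ) (b c : ℝ) (hc : c ≠ 0)
    (hLaplace : ∀ t : ℝ, 0 ≤ t →
      ∫ ω, Real.exp (-t * V ω) ∂μ
        = (Real.cosh (c / 2) / Real.cosh (Real.sqrt (c ^ 2 + 2 * t) / 2)) ^ b)
    (hInt : Integrable V μ) :
    ∫ ω, V ω ∂μ = b / (2 * c) * Real.tanh (c / 2) := by
  rw [integral_eq_neg_of_hasDerivWithinAt_laplace hInt hLaplace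
    (hasDerivAt_polyaGammaLaplace b hc).hasDerivWithinAt, neg_neg]

/-- Mean of a Pólya–Gamma PG(b,c) random variable, characterized by its Laplace
transform `E[e^{-tV}] = (cosh(c/2)/cosh(√(c²+2t)/2))^b`. -/
theorem polyaGamma_mean {Ω : Type*} [MeasurableSpace Ω] (μ : Measure Ω)
    [IsProbabilityMeasure μ] (V : Ω → ℝ) (b c : ℝ) (hb : 0 < b) (hc : c ≠ 0)
    (hLaplace : ∀ t : ℝ, 0 ≤ t →
      ∫ ω, Real.exp (-t * V ω) ∂μ
        = (Real.cosh (c / 2) / Real.cosh (Real.sqrt (c ^ 2 + 2 * t) / 2)) ^ b)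
    (hInt : Integrable V μ) :
    ∫ ω, V ω ∂μ = b / (2 * c) * Real.tanh (c / 2) :=
  polyaGamma_mean_general μ V b c hc hLaplace hInt
end

section
/- (Pólya–Gamma integral identity) For all ψ ∈ ℝ, a ∈ ℝ, with κ = a - 1/2: (e^ψ)^a / (1 + e^ψ) = 2^{-1} e^{κψ} ∫₀^∞ e^{-vψ²/2} g(v | 1, 0) dv, where g(·|1,0) is the PG(1,0) density. -/
/-!
Since `1 + e^ψ = 2 e^{ψ/2} cosh(ψ/2)`, the left side equals `2⁻¹ e^{(a - 1/2)ψ} / cosh(ψ/2)`,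
and `1 / cosh(ψ/2)` is the Laplace transform of the PG(1,0) density at `t = ψ²/2`.
-/

open MeasureTheory Set

namespace Real

theorem one_add_exp_eq_two_mul_exp_half_mul_cosh_half (x : ℝ) :
    1 + exp x = 2 * exp (x / 2) * cosh (x / 2) := by
  have hsq : exp x = exp (x / 2) * exp (x / 2) := by rw [← exp_add, add_halves]
  have hinv : exp (x / 2) * exp (-(x / 2)) = 1 := by rw [← exp_add, add_neg_cancel, exp_zero]
  rw [cosh_eq]
  linear_combination hsq - hinv

theorem cosh_sqrt_sq_div_four (x : ℝ) : cosh (√(x ^ 2 / 2 / 2)) = cosh (x / 2) := by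
  rw [show x ^ 2 / 2 / 2 = (x / 2) ^ 2 by ring, sqrt_sq_eq_abs, cosh_abs]

theorem exp_rpow_div_one_add_exp (x a : ℝ) :
    exp x ^ a / (1 + exp x) = 2⁻¹ * exp ((a - 1 / 2) * x) * (1 / cosh (x / 2)) := by
  have hcosh : cosh (x / 2) ≠ 0 := (cosh_pos _).ne'
  rw [← exp_mul, one_add_exp_eq_two_mul_exp_half_mul_cosh_half, sub_mul, exp_sub]
  field_simp

end Real

theorem polyaGamma_integral_identity_general (g : ℝ → ℝ)
    (hLaplace : ∀ t : ℝ, 0 ≤ t →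
      ∫ v in Ioi (0 : ℝ), Real.exp (-t * v) * g v = 1 / Real.cosh (Real.sqrt (t / 2)))
    (ψ a : ℝ) :
    Real.exp ψ ^ a / (1 + Real.exp ψ)
      = 2⁻¹ * Real.exp ((a - 1 / 2) * ψ)
        * ∫ v in Ioi (0 : ℝ), Real.exp (-v * ψ ^ 2 / 2) * g v := by
  have hLaplace_sq := hLaplace (ψ ^ 2 / 2) (by positivity)
  rw [Real.cosh_sqrt_sq_div_four] at hLaplace_sq
  rw [Real.exp_rpow_div_one_add_exp, ← hLaplace_sq]
  congr 2 with v
  ring_nf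

/-- Pólya–Gamma integral identity: for the PG(1,0) density `g`,
`e^{aψ}/(1+e^ψ) = 2⁻¹ e^{κψ} ∫₀^∞ e^{-vψ²/2} g(v) dv` with `κ = a - 1/2`. -/
theorem polyaGamma_integral_identity (g : ℝ → ℝ)
    (hg_nonneg : ∀ v ∈ Ioi (0 : ℝ), 0 ≤ g v)
    (hLaplace : ∀ t : ℝ, 0 ≤ t →
      ∫ v in Ioi (0 : ℝ), Real.exp (-t * v) * g v = 1 / Real.cosh (Real.sqrt (t / 2)))
    (ψ a : ℝ) :
    Real.exp ψ ^ a / (1 + Real.exp ψ)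
      = 2⁻¹ * Real.exp ((a - 1 / 2) * ψ)
        * ∫ v in Ioi (0 : ℝ), Real.exp (-v * ψ ^ 2 / 2) * g v :=
  polyaGamma_integral_identity_general g hLaplace ψ a
end
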